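/- arXiv:1810.06145 — 3 statements merged into one kernel-verified Lean document; each statement's English description precedes it below -/
import Mathlib

section
/- Strict betweenness of standard complexes: if C and C' are standard complexes with C < C' in the (lexicographic) total order, then there exists a standard complex C'' with C < C'' < C'. -/
open Polynomial

abbrev F2 : Type := ZMod 2
abbrev R : Type := Polynomial F2

noncomputable section

namespace AI

/-- The variable `U`. -/
def Uu : R := Polynomial.X

/-- The free `R`-module of rank `n`. -/
abbrev V (n : ℕ) : Type := Fin n → R

/-- The `i`-th standard basis vector. -/
def e {n : ℕ} (i : Fin n) : V n := fun j => if j = i then 1 else 0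

/-- The `i`-th standard basis vector over `F2`. -/
def e2 {n : ℕ} (i : Fin n) : Fin n → F2 := fun j => if j = i then 1 else 0

/-- `x` lies in the image of multiplication by `U`. -/
def modU {n : ℕ} (x : V n) : Prop := ∀ j, (x j).coeff 0 = 0

/-- `x` is homogeneous of degree `c` with respect to the generator gradings `gr`
(where `deg U = -2`). -/
def IsHomog {n : ℕ} (gr : Fin n → ℤ) (c : ℤ) (x : V n) : Prop :=
  ∀ (j : Fin n) (m : ℕ), (x j).coeff m ≠ 0 → gr j - 2 * (m : ℤ) = c

/-- `f` is a graded `R`-linear map of degree `dg`. -/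
def GradedMap {m n : ℕ} (gr₁ : Fin m → ℤ) (gr₂ : Fin n → ℤ) (dg : ℤ)
    (f : V m →ₗ[R] V n) : Prop :=
  ∀ i : Fin m, IsHomog gr₂ (gr₁ i + dg) (f (e i))

/-- The raw data of a free finitely generated `ℤ`-graded complex over `R = F[U]`. -/
structure PreCplx where
  n : ℕ
  gr : Fin n → ℤ
  d : V n →ₗ[R] V n

def IsCycle (C : PreCplx) (x : V C.n) : Prop := C.d x = 0

def IsBdry (C : PreCplx) (x : V C.n) : Prop := ∃ y, C.d y = x

/-- `x` is a cycle representing a `U`-nontorsion homology class. -/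
def NontorsionClass (C : PreCplx) (x : V C.n) : Prop :=
  IsCycle C x ∧ ∀ k : ℕ, ¬ IsBdry C ((Uu ^ k) • x)

/-- `U⁻¹H_*(C) ≅ F[U, U⁻¹]`, generated by a degree-zero cycle (normalization
convention: the maximal degree of a `U`-nontorsion cycle class is zero, so the
localized homology is supported in even degrees). -/
def HtowerCond (C : PreCplx) : Prop :=
  ∃ x : V C.n, IsCycle C x ∧ IsHomog C.gr 0 x ∧
    (∀ k : ℕ, ¬ IsBdry C ((Uu ^ k) • x)) ∧
    (∀ y : V C.n, IsCycle C y →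
      ∃ (k : ℕ) (p : R) (z : V C.n), (Uu ^ k) • y = p • x + C.d z)

/-- `C` is a genuine graded chain complex. -/
def IsCplx (C : PreCplx) : Prop :=
  GradedMap C.gr C.gr (-1) C.d ∧ C.d ∘ₗ C.d = 0

/-- `f` and `g` are homotopic mod `U`. -/
def HomotopicModU (C₁ C₂ : PreCplx) (f g : V C₁.n →ₗ[R] V C₂.n) : Prop :=
  ∃ H : V C₁.n →ₗ[R] V C₂.n, GradedMap C₁.gr C₂.gr 1 H ∧
    ∀ x, modU ((f + g + H ∘ₗ C₁.d + C₂.d ∘ₗ H) x)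

/-- The raw data of an almost ι-complex. -/
structure PreAI extends PreCplx where
  ι : V n →ₗ[R] V n

/-- `ω = 1 + ι`. -/
def omega (C : PreAI) : V C.n →ₗ[R] V C.n := LinearMap.id + C.ι

/-- `C` is an almost ι-complex. -/
def IsAICplx (C : PreAI) : Prop :=
  IsCplx C.toPreCplx ∧
  GradedMap C.gr C.gr 0 C.ι ∧
  (∀ x, modU ((C.ι ∘ₗ C.d + C.d ∘ₗ C.ι) x)) ∧
  HomotopicModU C.toPreCplx C.toPreCplx (C.ι ∘ₗ C.ι) LinearMap.id ∧
  HtowerCond C.toPreCplx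

/-- `C` is a genuine ι-complex: `ι` is an honest chain map whose square is
genuinely chain homotopic to the identity. -/
def IsIotaCplx (C : PreAI) : Prop :=
  IsCplx C.toPreCplx ∧
  GradedMap C.gr C.gr 0 C.ι ∧
  C.ι ∘ₗ C.d = C.d ∘ₗ C.ι ∧
  (∃ H : V C.n →ₗ[R] V C.n, GradedMap C.gr C.gr 1 H ∧
    C.ι ∘ₗ C.ι + LinearMap.id = H ∘ₗ C.d + C.d ∘ₗ H) ∧
  HtowerCond C.toPreCplx

/-- A reduced complex: the differential vanishes mod `U`. -/
def Reduced (C : PreAI) : Prop := ∀ x, modU (C.d x)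

/-- `f` is an almost ι-morphism. -/
def isAIMorphism (C₁ C₂ : PreAI) (f : V C₁.n →ₗ[R] V C₂.n) : Prop :=
  GradedMap C₁.gr C₂.gr 0 f ∧
  f ∘ₗ C₁.d = C₂.d ∘ₗ f ∧
  HomotopicModU C₁.toPreCplx C₂.toPreCplx (f ∘ₗ C₁.ι) (C₂.ι ∘ₗ f)

/-- A local map: an almost ι-morphism inducing an isomorphism on `U`-localized
homology (equivalently, with the normalization conventions in force, preserving
`U`-nontorsion cycle classes). -/
def isLocalMap (C₁ C₂ : PreAI) (f : V C₁.n →ₗ[R] V C₂.n) : Prop :=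
  isAIMorphism C₁ C₂ f ∧
  ∀ x, NontorsionClass C₁.toPreCplx x → NontorsionClass C₂.toPreCplx (f x)

/-- Local equivalence of almost ι-complexes. -/
def LocallyEquiv (C₁ C₂ : PreAI) : Prop :=
  (∃ f, isLocalMap C₁ C₂ f) ∧ (∃ g, isLocalMap C₂ C₁ g)

/-- The tensor product (over `R`) of linear maps between free modules,
in the bases indexed by `finProdFinEquiv`. -/
def tmap {m n m' n' : ℕ} (f : V m →ₗ[R] V m') (g : V n →ₗ[R] V n') :
    V (m * n) →ₗ[R] V (m' * n') where
  toFun x := fun p => ∑ q : Fin (m * n),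
    x q * f (e (finProdFinEquiv.symm q).1) (finProdFinEquiv.symm p).1
        * g (e (finProdFinEquiv.symm q).2) (finProdFinEquiv.symm p).2
  map_add' x y := by
    funext p
    simp [Pi.add_apply, add_mul, Finset.sum_add_distrib]
  map_smul' c x := by
    funext p
    simp only [RingHom.id_apply, Pi.smul_apply, smul_eq_mul, Finset.mul_sum]
    exact Finset.sum_congr rfl fun q _ => by ring

/-- The tensor product of complexes. -/
def tensorPre (C₁ C₂ : PreCplx) : PreCplx where
  n := C₁.n * C₂.n
  gr := fun q => C₁.gr (finProdFinEquiv.symm q).1 + C₂.gr (finProdFinEquiv.symm q).2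
  d := tmap C₁.d LinearMap.id + tmap LinearMap.id C₂.d

/-- The tensor product of almost ι-complexes. -/
def tensorAI (C₁ C₂ : PreAI) : PreAI where
  toPreCplx := tensorPre C₁.toPreCplx C₂.toPreCplx
  ι := tmap C₁.ι C₂.ι

/-- The transpose of a square matrix map (the dual map in the dual basis). -/
def tr {n : ℕ} (f : V n →ₗ[R] V n) : V n →ₗ[R] V n where
  toFun x := fun j => ∑ i : Fin n, x i * f (e j) i
  map_add' x y := by
    funext j
    simp [Pi.add_apply, add_mul, Finset.sum_add_distrib]
  map_smul' c x := by
    funext j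
    simp only [RingHom.id_apply, Pi.smul_apply, smul_eq_mul, Finset.mul_sum]
    exact Finset.sum_congr rfl fun i _ => by ring

/-- The dual complex. -/
def dualPre (C : PreCplx) : PreCplx where
  n := C.n
  gr := fun i => -C.gr i
  d := tr C.d

/-- The dual almost ι-complex. -/
def dualAI (C : PreAI) : PreAI where
  toPreCplx := dualPre C.toPreCplx
  ι := tr C.ι

/-- The trivial complex `C(0) = (F[U], ∂ = 0, ι = id)`. -/
def cZero : PreAI := ⟨⟨1, fun _ => 0, 0⟩, LinearMap.id⟩

/-- The contraction map `C ⊗ C^∨ → F[U]`, `x ⊗ y ↦ y(x)`. -/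
def contr (n : ℕ) : V (n * n) →ₗ[R] V 1 where
  toFun x := fun _ => ∑ i : Fin n, x (finProdFinEquiv (i, i))
  map_add' x y := by funext j; simp [Pi.add_apply, Finset.sum_add_distrib]
  map_smul' c x := by
    funext j
    simp only [RingHom.id_apply, Pi.smul_apply, smul_eq_mul, Finset.mul_sum]

/-! ### Standard and augmented complexes -/

/-- The `i`-th symbol (0-indexed) of the parameter sequence, padded by zeros. -/
def seqAt (M : List ℤ) (i : ℕ) : ℤ := M.getD i 0

/-- Grading step of a `b`-arrow. -/
def bstep (b : ℤ) : ℤ := (if 0 < b then 1 else -1) - 2 * b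

/-- Grading of the generator `T_i` of the standard/augmented complex. -/
def stdGr (M : List ℤ) (i : ℕ) : ℤ :=
  ∑ s ∈ Finset.range i, if s % 2 = 1 then bstep (seqAt M s) else 0

/-- A linear endomorphism of `V n` given by a matrix of coefficients. -/
def ofMatrix {n : ℕ} (c : ℕ → ℕ → R) : V n →ₗ[R] V n where
  toFun x := fun j => ∑ i : Fin n, x i * c i j
  map_add' x y := by
    funext j
    simp [Pi.add_apply, add_mul, Finset.sum_add_distrib]
  map_smul' r x := by
    funext j
    simp only [RingHom.id_apply, Pi.smul_apply, smul_eq_mul, Finset.mul_sum]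
    exact Finset.sum_congr rfl fun i _ => by ring

/-- Matrix of the differential of the standard/augmented complex: the `b`-symbol
at (0-indexed) odd position `s` of `M` relates `T_s` and `T_{s+1}`. -/
def dCoef (M : List ℤ) (i j : ℕ) : R :=
  if i % 2 = 1 ∧ seqAt M i < 0 ∧ j = i + 1 then Uu ^ (seqAt M i).natAbs
  else if i % 2 = 0 ∧ 0 < i ∧ 0 < seqAt M (i - 1) ∧ j + 1 = i then
    Uu ^ (seqAt M (i - 1)).natAbs
  else 0

/-- Matrix of `ω = 1 + ι` on the standard/augmented complex: the `a`-symbol at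
(0-indexed) even position `s` of `M` relates `T_s` and `T_{s+1}`. -/
def wCoef (M : List ℤ) (i j : ℕ) : R :=
  if i % 2 = 0 ∧ seqAt M i = -1 ∧ j = i + 1 then 1
  else if i % 2 = 1 ∧ seqAt M (i - 1) = 1 ∧ j + 1 = i then 1
  else 0

/-- Matrix of `ι = 1 + ω` (char 2). -/
def iCoef (M : List ℤ) (i j : ℕ) : R :=
  (if i = j then 1 else 0) + wCoef M i j

/-- The standard (even length) or augmented (odd length) complex on generators
`T_0, …, T_{M.length}` determined by the symbol sequence `M`. -/
def symCplx (M : List ℤ) : PreAI :=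
  ⟨⟨M.length + 1, fun i => stdGr M i, ofMatrix (dCoef M)⟩, ofMatrix (iCoef M)⟩

/-- Validity of a standard parameter sequence. -/
def StdParams (M : List ℤ) : Prop :=
  M.length % 2 = 0 ∧
  ∀ i < M.length, if i % 2 = 0 then seqAt M i = 1 ∨ seqAt M i = -1 else seqAt M i ≠ 0

/-- Validity of an augmented parameter sequence. -/
def AugParams (M : List ℤ) : Prop :=
  M.length % 2 = 1 ∧
  ∀ i < M.length, if i % 2 = 0 then seqAt M i = 1 ∨ seqAt M i = -1 else seqAt M i ≠ 0

/-- The modified order `<!` on `ℤ`: `−1 <! −2 <! ⋯ <! 0 <! ⋯ <! 2 <! 1`. -/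
def ltB (x y : ℤ) : Prop :=
  (x < 0 ∧ 0 ≤ y) ∨ (x ≤ 0 ∧ 0 < y) ∨ (x < 0 ∧ y < 0 ∧ y < x) ∨ (0 < x ∧ 0 < y ∧ y < x)

def leB (x y : ℤ) : Prop := ltB x y ∨ x = y

/-- Strict lexicographic order on (zero-padded) parameter sequences. -/
def lexLt (M M' : List ℤ) : Prop :=
  ∃ k : ℕ, (∀ i < k, seqAt M i = seqAt M' i) ∧ ltB (seqAt M k) (seqAt M' k)

def lexLe (M M' : List ℤ) : Prop := lexLt M M' ∨ ∀ i, seqAt M i = seqAt M' i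

/-- A short map from the standard (even `M.length`) or augmented (odd `M.length`)
complex determined by `M` to `A`: the `ω`-condition (standard case) resp. the
`∂`-condition (augmented case) is waived on the final generator. -/
def isShortMap (M : List ℤ) (A : PreAI) (f : V (M.length + 1) →ₗ[R] V A.n) : Prop :=
  GradedMap (symCplx M).gr A.gr 0 f ∧
  (∀ i : Fin (M.length + 1), ((i : ℕ) < M.length ∨ M.length % 2 = 0) →
    A.d (f (e i)) = f ((symCplx M).d (e i))) ∧
  (∀ i : Fin (M.length + 1), ((i : ℕ) < M.length ∨ M.length % 2 = 1) →
    modU ((omega A) (f (e i)) + f ((omega (symCplx M)) (e i))))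

/-- A local short map: `T_0` goes to a `U`-nontorsion cycle class. -/
def isLocalShortMap (M : List ℤ) (A : PreAI) (f : V (M.length + 1) →ₗ[R] V A.n) : Prop :=
  isShortMap M A f ∧ NontorsionClass A.toPreCplx (f (e ⟨0, Nat.succ_pos _⟩))

/-- The sequence of invariants `s_i(A)` (1-indexed in the paper; 0-indexed here):
`s k` is the `≤!`-maximum of the `(k+1)`-st symbols among standard complexes
locally mapping to `A` whose first `k` symbols are `s 0, …, s (k-1)`. -/
def IsInvariantSeq (A : PreAI) (s : ℕ → ℤ) : Prop :=
  ∀ k : ℕ,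
    (∃ M : List ℤ, StdParams M ∧ (∃ f, isLocalMap (symCplx M) A f) ∧
      ∀ i ≤ k, seqAt M i = s i) ∧
    (∀ M : List ℤ, StdParams M → (∃ f, isLocalMap (symCplx M) A f) →
      (∀ i < k, seqAt M i = s i) → leB (seqAt M k) (s k))

/-- Reduction mod `U` of a linear map, as an `F₂`-linear map. -/
def mapHat {m n : ℕ} (f : V m →ₗ[R] V n) : (Fin m → F2) →ₗ[F2] (Fin n → F2) where
  toFun x := fun j => ∑ i : Fin m, x i * (f (e i) j).coeff 0
  map_add' x y := by
    funext j
    simp [Pi.add_apply, add_mul, Finset.sum_add_distrib]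
  map_smul' c x := by
    funext j
    simp only [RingHom.id_apply, Pi.smul_apply, smul_eq_mul, Finset.mul_sum]
    exact Finset.sum_congr rfl fun i _ => by ring

/-- The induced action `ω̂` on `C/U`. -/
def wHat (C : PreAI) : (Fin C.n → F2) →ₗ[F2] (Fin C.n → F2) := mapHat (omega C)

end AI

namespace AI

lemma seqAt_zero_of_ge (M : List ℤ) (i : ℕ) (h : M.length ≤ i) : seqAt M i = 0 := by
  simp [seqAt, List.getD_eq_getElem?_getD, List.getElem?_eq_none h]

lemma lt_length_of_ne_zero {M : List ℤ} {i : ℕ} (h : seqAt M i ≠ 0) : i < M.length := by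
  by_contra hh
  exact h (seqAt_zero_of_ge M i (le_of_not_gt hh))

lemma seqAt_map_range (g : ℕ → ℤ) (L i : ℕ) :
    seqAt ((List.range L).map g) i = if i < L then g i else 0 := by
  unfold seqAt
  rcases Nat.lt_or_ge i L with hi | hi
  · rw [List.getD_eq_getElem _ _ (by simpa using hi)]
    simp [hi]
  · rw [List.getD_eq_default _ _ (by simpa using hi)]
    simp [Nat.not_lt.mpr hi]

lemma ltB_lt_one {w : ℤ} (h : w ≠ 1) : ltB w 1 := by unfold ltB; omega

lemma ltB_neg_one_lt {w : ℤ} (h : w ≠ -1) : ltB (-1) w := by unfold ltB; omega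

/-- strict betweenness: if `C < C'` as standard complexes then
there is a standard complex strictly between them. -/
theorem strict_betweenness (M M' : List ℤ) (hM : StdParams M) (hM' : StdParams M')
    (h : lexLt M M') :
    ∃ M'' : List ℤ, StdParams M'' ∧ lexLt M M'' ∧ lexLt M'' M' := by
  obtain ⟨k, hagree, hlt⟩ := h
  by_cases hx : seqAt M k = 0
  · -- Case B : M ends exactly at k; y = 1
    have hy : 0 < seqAt M' k := by
      unfold ltB at hlt; omega
    have hkM' : k < M'.length := lt_length_of_ne_zero (by omega)
    have hkM : M.length ≤ k := by
      by_contra hh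
      have := hM.2 k (lt_of_not_ge hh)
      rcases Nat.even_or_odd k with he | ho
      · simp [Nat.even_iff.mp he] at this; omega
      · simp [Nat.odd_iff.mp ho] at this; exact this hx
    have hkeq : k = M.length := by
      rcases Nat.lt_or_ge M.length k with hlt2 | hge
      · exfalso
        have h0 : seqAt M' M.length = 0 := by
          rw [← hagree M.length hlt2]
          exact seqAt_zero_of_ge M M.length le_rfl
        have := hM'.2 M.length (lt_trans hlt2 hkM')
        rcases Nat.even_or_odd M.length with he | ho
        · simp [Nat.even_iff.mp he] at this; omega
        · simp [Nat.odd_iff.mp ho] at this; omega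
      · omega
    have hkeven : k % 2 = 0 := by rw [hkeq]; exact hM.1
    have hy1 : seqAt M' k = 1 := by
      have := hM'.2 k hkM'
      simp [hkeven] at this; omega
    have hex : ∃ j, k + 1 ≤ j ∧ seqAt M' j ≠ -1 := by
      refine ⟨max (k+1) M'.length, le_max_left _ _, ?_⟩
      rw [seqAt_zero_of_ge M' _ (le_max_right _ _)]; decide
    set j := Nat.find hex with hjdef
    obtain ⟨hjk, hjne⟩ := Nat.find_spec hex
    have hjmin : ∀ i, k + 1 ≤ i → i < j → seqAt M' i = -1 := by
      intro i h1 h2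
      by_contra hc
      exact absurd (Nat.find_le ⟨h1, hc⟩) (not_le.mpr h2)
    set L := j + 1 + (j + 1) % 2 with hLdef
    have hLeven : L % 2 = 0 := by omega
    have hjL : j < L := by omega
    have hkL : k < L := by omega
    set g : ℕ → ℤ := fun i => if i < k then seqAt M i else if i = k then 1 else -1 with hg
    refine ⟨(List.range L).map g, ⟨?_, ?_⟩, ⟨k, ?_, ?_⟩, ⟨j, ?_, ?_⟩⟩
    · simpa using hLeven
    · intro i hi
      have hiL : i < L := by simpa using hi
      rw [seqAt_map_range, if_pos hiL]
      rcases Nat.lt_or_ge i k with h1 | h1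
      · have hiM : i < M.length := by omega
        have := hM.2 i hiM
        simp only [hg, if_pos h1]
        exact this
      · rcases Nat.eq_or_lt_of_le h1 with h2 | h2
        · simp only [hg, if_neg (by omega : ¬ i < k), if_pos h2.symm]
          split <;> simp
        · simp only [hg, if_neg (by omega : ¬ i < k), if_neg (by omega : ¬ i = k)]
          split <;> simp
    · intro i hi
      rw [seqAt_map_range, if_pos (by omega : i < L)]
      simp [hg, hi]
    · rw [seqAt_map_range, if_pos hkL, hx]
      have hgk : g k = 1 := by simp [hg]
      rw [hgk]
      unfold ltB; omega
    · intro i hi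
      rw [seqAt_map_range, if_pos (by omega : i < L)]
      rcases Nat.lt_or_ge i k with h1 | h1
      · rw [hg]; simp only [if_pos h1]; exact hagree i h1
      · rcases Nat.eq_or_lt_of_le h1 with h2 | h2
        · rw [hg]; simp only [if_neg (by omega : ¬ i < k), if_pos h2.symm]
          rw [← h2, hy1]
        · rw [hg]; simp only [if_neg (by omega : ¬ i < k), if_neg (by omega : ¬ i = k)]
          exact (hjmin i (by omega) hi).symm
    · rw [seqAt_map_range, if_pos hjL]
      rw [hg]; simp only [if_neg (by omega : ¬ j < k), if_neg (by omega : ¬ j = k)]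
      exact ltB_neg_one_lt hjne
  · -- Case A : generic
    have hkM : k < M.length := lt_length_of_ne_zero hx
    have hex : ∃ j, k + 1 ≤ j ∧ seqAt M j ≠ 1 := by
      refine ⟨max (k+1) M.length, le_max_left _ _, ?_⟩
      rw [seqAt_zero_of_ge M _ (le_max_right _ _)]; decide
    set j := Nat.find hex with hjdef
    obtain ⟨hjk, hjne⟩ := Nat.find_spec hex
    have hjmin : ∀ i, k + 1 ≤ i → i < j → seqAt M i = 1 := by
      intro i h1 h2
      by_contra hc
      exact absurd (Nat.find_le ⟨h1, hc⟩) (not_le.mpr h2)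
    set L := j + 1 + (j + 1) % 2 with hLdef
    have hLeven : L % 2 = 0 := by omega
    have hjL : j < L := by omega
    have hkL : k < L := by omega
    set g : ℕ → ℤ := fun i => if i < j then seqAt M i else 1 with hg
    refine ⟨(List.range L).map g, ⟨?_, ?_⟩, ⟨j, ?_, ?_⟩, ⟨k, ?_, ?_⟩⟩
    · simpa using hLeven
    · intro i hi
      have hiL : i < L := by simpa using hi
      rw [seqAt_map_range, if_pos hiL]
      rcases Nat.lt_or_ge i j with h1 | h1
      · rw [hg]; simp only [if_pos h1]
        rcases Nat.lt_or_ge i (k+1) with h2 | h2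
        · exact hM.2 i (by omega)
        · rw [hjmin i h2 h1]
          split <;> simp
      · rw [hg]; simp only [if_neg (by omega : ¬ i < j)]
        split <;> simp
    · intro i hi
      rw [seqAt_map_range, if_pos (by omega : i < L)]
      simp [hg, hi]
    · rw [seqAt_map_range, if_pos hjL]
      rw [hg]; simp only [if_neg (lt_irrefl j)]
      exact ltB_lt_one hjne
    · intro i hi
      rw [seqAt_map_range, if_pos (by omega : i < L)]
      rw [hg]; simp only [if_pos (by omega : i < j)]
      exact hagree i hi
    · rw [seqAt_map_range, if_pos hkL]
      rw [hg]; simp only [if_pos (by omega : k < j)]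
      exact hlt


end AI
end
end

section
/- Extension lemma: let C = C(a_i,b_i) be a standard complex of length 2n and f : C ⇝ A a short map into a reduced almost ι-complex A (i.e., f is a U-equivariant grading-preserving chain map satisfying ωf(T_i) + f(ωT_i) ≡ 0 mod U for 0 ≤ i ≤ 2n−1, with no ω-condition on T_{2n}). Then there exists a standard complex C' extending C (its parameter sequence has (a_i,b_i) as a prefix) and an almost ι-morphism f' : C' → A agreeing with f on T_0,…,T_{2n}. If f(T_0) represents a U-nontorsion homology class, then f' is local. -/
open Polynomial

noncomputable section

/-!
Append the symbols `(-1, -1)` to the parameter sequence: send `T_{2n+1}` to `y = ω f(T_{2n})`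
and `T_{2n+2}` to `∂y / U`, which exists because `A` is reduced. Then `ω T_{2n} = T_{2n+1}`
is respected by construction, and the new condition `ω y ≡ 0 mod U` holds because
`ω² = 1 + ι²` is null-homotopic mod `U` while `∂ ≡ 0 mod U`.
Each step raises the grading of the last generator by one, and the gradings of `A` are bounded,
so after finitely many steps the last generator is sent to `0`; then the `ω`-condition on it is
automatic and the short map is an almost ι-morphism (with homotopy `0`).

For locality: a cycle `x` of a standard complex satisfies `U^K (x - x₀ T₀) ∈ im ∂`, so if
some `U^k f(x)` were a boundary, so would be `q • f(T₀)` for a nonzero polynomial `q`. Taking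
the homogeneous component of the right degree turns this into `U^m f(T₀) ∈ im ∂`.
-/

namespace AI

section CharTwo

variable {X : Type*} [AddCommGroup X] [Module R X]

lemma add_self_eq_zero_of_module (x : X) : x + x = 0 := by
  rw [← two_smul R x, show (2 : R) = 0 from CharTwo.two_eq_zero, zero_smul]

lemma add_add_cancel_right_of_module (a b : X) : a + b + b = a := by
  rw [add_assoc, add_self_eq_zero_of_module, add_zero]

end CharTwo

lemma e_eq_single {n : ℕ} (i : Fin n) : e i = Pi.single i 1 := by
  ext j
  simp [e, Pi.single_apply]

lemma eq_sum_smul_e {n : ℕ} (u : V n) : u = ∑ i, u i • e i := by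
  ext j
  simp [e, Finset.sum_apply]

lemma map_eq_sum_smul_map_e {m n : ℕ} (f : V m →ₗ[R] V n) (u : V m) :
    f u = ∑ i, u i • f (e i) := by
  conv_lhs => rw [eq_sum_smul_e u]
  simp only [map_sum, map_smul]

lemma linearMap_ext_e {m n : ℕ} {f g : V m →ₗ[R] V n} (h : ∀ i, f (e i) = g (e i)) :
    f = g :=
  LinearMap.ext fun u => by simp only [map_eq_sum_smul_map_e f u, map_eq_sum_smul_map_e g u, h]

lemma ofMatrix_e {n : ℕ} (c : ℕ → ℕ → R) (i j : Fin n) : ofMatrix c (e i) j = c i j := by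
  simp [ofMatrix, e]

def ofGens (n : ℕ) {m : ℕ} (G : ℕ → V m) : V n →ₗ[R] V m :=
  Fintype.linearCombination R fun i : Fin n => G i

def gens {n m : ℕ} (f : V n →ₗ[R] V m) (j : ℕ) : V m :=
  if h : j < n then f (e ⟨j, h⟩) else 0

section ofGens

variable {n m : ℕ} (G : ℕ → V m)

lemma ofGens_e (i : Fin n) : ofGens n G (e i) = G i := by
  simp [ofGens, e_eq_single, Fintype.linearCombination_apply_single]

lemma ofGens_ofMatrix_e (c : ℕ → ℕ → R) (i : Fin n) :
    ofGens n G (ofMatrix c (e i)) = ∑ j ∈ Finset.range n, c i j • G j := by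
  rw [ofGens, Fintype.linearCombination_apply]
  simp only [ofMatrix_e]
  exact Fin.sum_univ_eq_sum_range (fun j => c i j • G j) n

lemma ofGens_gens (f : V n →ₗ[R] V m) : ofGens n (gens f) = f :=
  linearMap_ext_e fun i => by simp [ofGens_e, gens]

end ofGens

lemma modU_iff_exists {n : ℕ} {x : V n} : modU x ↔ ∃ y, Uu • y = x := by
  constructor
  · intro h
    refine ⟨fun j => (x j).divX, funext fun j => ?_⟩
    have := divX_mul_X_add (x j)
    rw [h j, C_0, add_zero] at this
    rw [Pi.smul_apply, smul_eq_mul, Uu, mul_comm, this]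
  · rintro ⟨y, rfl⟩ j
    exact coeff_X_mul_zero (y j)

section modU

variable {n m : ℕ} {x y : V n}

lemma modU_zero : modU (0 : V n) := fun j => by simp

lemma modU_add (hx : modU x) (hy : modU y) : modU (x + y) := fun j => by
  simp [hx j, hy j]

lemma modU_map (f : V n →ₗ[R] V m) (hx : modU x) : modU (f x) := by
  obtain ⟨y, rfl⟩ := modU_iff_exists.1 hx
  exact modU_iff_exists.2 ⟨f y, (map_smul f Uu y).symm⟩

lemma modU_smul (p : R) (hx : modU x) : modU (p • x) :=
  modU_map (p • LinearMap.id) hx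

lemma modU_of_forall_e (L : V n →ₗ[R] V m) (h : ∀ i, modU (L (e i))) (x : V n) :
    modU (L x) := by
  rw [map_eq_sum_smul_map_e]
  exact Finset.sum_induction _ modU (fun _ _ => modU_add) modU_zero
    fun i _ => modU_smul _ (h i)

end modU

section IsHomog

variable {m n : ℕ} {gr : Fin n → ℤ} {c : ℤ} {x y : V n}

lemma isHomog_zero (gr : Fin n → ℤ) (c : ℤ) : IsHomog gr c (0 : V n) := by
  intro j k h
  simp at h

lemma IsHomog.add (hx : IsHomog gr c x) (hy : IsHomog gr c y) : IsHomog gr c (x + y) := by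
  intro j m h
  rw [Pi.add_apply, coeff_add] at h
  by_cases h1 : (x j).coeff m = 0
  · exact hy j m (by rwa [h1, zero_add] at h)
  · exact hx j m h1

lemma isHomog_e (gr : Fin n → ℤ) (i : Fin n) : IsHomog gr (gr i) (e i) := by
  intro j m h
  by_cases hji : j = i
  · subst hji
    have hm : m = 0 := by
      by_contra hm
      simp [e, coeff_one, hm] at h
    simp [hm]
  · simp [e, hji] at h

lemma IsHomog.map {gr₁ : Fin m → ℤ} {dg : ℤ} {f : V m →ₗ[R] V n}
    (hf : GradedMap gr₁ gr dg f) {x : V m} (hx : IsHomog gr₁ c x) :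
    IsHomog gr (c + dg) (f x) := by
  intro j k hc
  rw [map_eq_sum_smul_map_e f x, Finset.sum_apply, finsetSum_coeff] at hc
  obtain ⟨i, -, hi⟩ := Finset.exists_ne_zero_of_sum_ne_zero hc
  rw [Pi.smul_apply, smul_eq_mul, coeff_mul] at hi
  obtain ⟨p, hp, hp0⟩ := Finset.exists_ne_zero_of_sum_ne_zero hi
  rw [Finset.HasAntidiagonal.mem_antidiagonal] at hp
  have h1 := hx i p.1 (left_ne_zero_of_mul hp0)
  have h2 := hf i j p.2 (right_ne_zero_of_mul hp0)
  omega

lemma IsHomog.of_Uu_smul (h : IsHomog gr c (Uu • x)) : IsHomog gr (c + 2) x := by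
  intro j m hm
  have := h j (m + 1) (by rwa [Pi.smul_apply, smul_eq_mul, Uu, coeff_X_mul])
  omega

lemma IsHomog.eq_zero_of_lt (hx : IsHomog gr c x) (hc : ∀ j, gr j < c) : x = 0 := by
  ext j m
  by_contra h
  have := hx j m h
  have := hc j
  omega

end IsHomog

def gradedPart {n : ℕ} (gr : Fin n → ℤ) (c : ℤ) : V n →+ V n where
  toFun v j :=
    if 2 ∣ gr j - c ∧ c ≤ gr j then
      monomial ((gr j - c) / 2).toNat ((v j).coeff ((gr j - c) / 2).toNat)
    else 0
  map_zero' := by ext; simp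
  map_add' v w := by
    ext j : 1
    simp only [Pi.add_apply, coeff_add, map_add]
    split_ifs <;> simp

section gradedPart

variable {m n : ℕ} {gr : Fin n → ℤ} {c c' : ℤ} {v : V n}

lemma coeff_gradedPart (gr : Fin n → ℤ) (c : ℤ) (v : V n) (j : Fin n) (k : ℕ) :
    (gradedPart gr c v j).coeff k = if gr j - 2 * k = c then (v j).coeff k else 0 := by
  simp only [gradedPart, AddMonoidHom.coe_mk, ZeroHom.coe_mk]
  split_ifs with h1 h2 h2 <;> simp only [coeff_monomial, coeff_zero]
  · rw [if_pos (by omega)]; congr 1; omega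
  · rw [if_neg (by omega)]
  · omega

lemma isHomog_gradedPart (gr : Fin n → ℤ) (c : ℤ) (v : V n) :
    IsHomog gr c (gradedPart gr c v) := by
  intro j k h
  rw [coeff_gradedPart] at h
  by_contra hc
  exact h (if_neg hc)

lemma IsHomog.gradedPart_eq (hv : IsHomog gr c' v) (c : ℤ) :
    gradedPart gr c v = if c = c' then v else 0 := by
  ext j k
  rw [coeff_gradedPart]
  by_cases hk : (v j).coeff k = 0
  · split_ifs <;> simp [hk]
  · have := hv j k hk
    split_ifs <;> first | rfl | omega

lemma exists_eq_sum_gradedPart (gr : Fin n → ℤ) (v : V n) :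
    ∃ S : Finset ℤ, v = ∑ c ∈ S, gradedPart gr c v := by
  classical
  refine ⟨Finset.univ.biUnion fun j => (v j).support.image fun k : ℕ => gr j - 2 * (k : ℤ),
    ?_⟩
  ext j k
  simp only [Finset.sum_apply, finsetSum_coeff, coeff_gradedPart, Finset.sum_ite_eq]
  split_ifs with h
  · rfl
  · by_contra hk
    exact h (Finset.mem_biUnion.2 ⟨j, Finset.mem_univ _,
      Finset.mem_image.2 ⟨k, mem_support_iff.2 hk, rfl⟩⟩)

lemma gradedPart_map {gr₁ : Fin m → ℤ} {dg : ℤ} {f : V m →ₗ[R] V n}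
    (hf : GradedMap gr₁ gr dg f) (c : ℤ) (v : V m) :
    gradedPart gr (c + dg) (f v) = f (gradedPart gr₁ c v) := by
  obtain ⟨S, hS⟩ := exists_eq_sum_gradedPart gr₁ v
  have key : ∀ c', gradedPart gr (c + dg) (f (gradedPart gr₁ c' v)) =
      f (gradedPart gr₁ c (gradedPart gr₁ c' v)) := fun c' => by
    rw [((isHomog_gradedPart gr₁ c' v).map hf).gradedPart_eq,
      (isHomog_gradedPart gr₁ c' v).gradedPart_eq]
    simp only [add_left_inj]
    split_ifs <;> simp
  conv_lhs => rw [hS]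
  conv_rhs => rw [hS]
  simp only [map_sum, key]

lemma gradedPart_smul_of_isHomog (hv : IsHomog gr c v) (q : R) (k : ℕ) :
    gradedPart gr (c - 2 * k) (q • v) = monomial k (q.coeff k) • v := by
  ext j l
  simp only [coeff_gradedPart, Pi.smul_apply, smul_eq_mul, coeff_mul, coeff_monomial]
  split_ifs with h
  · refine Finset.sum_congr rfl fun p hp => ?_
    rw [Finset.HasAntidiagonal.mem_antidiagonal] at hp
    by_cases hv0 : (v j).coeff p.2 = 0
    · simp [hv0]
    · have := hv j p.2 hv0
      rw [if_pos (by omega), show p.1 = k by omega]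
  · refine (Finset.sum_eq_zero fun p hp => ?_).symm
    rw [Finset.HasAntidiagonal.mem_antidiagonal] at hp
    by_cases hv0 : (v j).coeff p.2 = 0
    · simp [hv0]
    · have := hv j p.2 hv0
      rw [if_neg (by omega), zero_mul]

end gradedPart

lemma isBdry_gradedPart {C : PreCplx} (hd : GradedMap C.gr C.gr (-1) C.d) {v : V C.n}
    (hv : IsBdry C v) (c : ℤ) : IsBdry C (gradedPart C.gr c v) := by
  obtain ⟨w, rfl⟩ := hv
  refine ⟨gradedPart C.gr (c + 1) w, ?_⟩
  rw [← gradedPart_map hd, add_neg_cancel_right]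

lemma not_isBdry_smul {C : PreCplx} (hd : GradedMap C.gr C.gr (-1) C.d) {x : V C.n} {c : ℤ}
    (hx : IsHomog C.gr c x) (hnt : ∀ k : ℕ, ¬ IsBdry C (Uu ^ k • x)) {q : R} (hq : q ≠ 0) :
    ¬ IsBdry C (q • x) := fun h => by
  have hcoeff : q.leadingCoeff = 1 := by
    have := leadingCoeff_ne_zero.2 hq
    generalize q.leadingCoeff = a at this ⊢
    revert a; decide
  apply hnt q.natDegree
  rw [Uu, X_pow_eq_monomial, ← hcoeff, leadingCoeff, ← gradedPart_smul_of_isHomog hx]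
  exact isBdry_gradedPart hd h _

section seqAt

variable {M L : List ℤ}

lemma seqAt_append_of_lt {i : ℕ} (h : i < M.length) : seqAt (M ++ L) i = seqAt M i :=
  List.getD_append M L 0 i h

lemma seqAt_of_length_le {i : ℕ} (h : M.length ≤ i) : seqAt M i = 0 :=
  List.getD_eq_default _ _ h

lemma seqAt_append_pair_length (a b : ℤ) : seqAt (M ++ [a, b]) M.length = a := by
  simp [seqAt]

lemma seqAt_append_pair_length_succ (a b : ℤ) :
    seqAt (M ++ [a, b]) (M.length + 1) = b := by
  simp [seqAt]

lemma stdGr_append_of_le {i : ℕ} (h : i ≤ M.length) : stdGr (M ++ L) i = stdGr M i :=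
  Finset.sum_congr rfl fun s hs => by
    rw [seqAt_append_of_lt ((Finset.mem_range.1 hs).trans_le h)]

lemma stdGr_succ (i : ℕ) :
    stdGr M (i + 1) = stdGr M i + if i % 2 = 1 then bstep (seqAt M i) else 0 :=
  Finset.sum_range_succ _ _

lemma stdGr_append_pair_length_succ {a b : ℤ} (hM : M.length % 2 = 0) :
    stdGr (M ++ [a, b]) (M.length + 1) = stdGr M M.length := by
  rw [stdGr_succ, stdGr_append_of_le le_rfl, if_neg (by omega), add_zero]

lemma stdGr_append_pair_length_add_two {a b : ℤ} (hM : M.length % 2 = 0) :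
    stdGr (M ++ [a, b]) (M.length + 2) = stdGr M M.length + bstep b := by
  rw [stdGr_succ, stdGr_append_pair_length_succ hM, if_pos (by omega),
    seqAt_append_pair_length_succ]

end seqAt

lemma StdParams.append {M : List ℤ} {a b : ℤ} (hM : StdParams M) (ha : a = 1 ∨ a = -1)
    (hb : b ≠ 0) : StdParams (M ++ [a, b]) := by
  refine ⟨by simp [hM.1], fun i hi => ?_⟩
  simp only [List.length_append, List.length_cons, List.length_nil] at hi
  obtain hi | rfl | rfl : i < M.length ∨ i = M.length ∨ i = M.length + 1 := by omega
  · rw [seqAt_append_of_lt hi]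
    exact hM.2 i hi
  · simpa [hM.1, seqAt_append_pair_length] using ha
  · simpa [seqAt_append_pair_length_succ, Nat.add_mod, hM.1] using hb

lemma omega_symCplx (M : List ℤ) : omega (symCplx M) = ofMatrix (wCoef M) := by
  refine linearMap_ext_e fun i => funext fun j => ?_
  change e i j + ofMatrix (iCoef M) (e i) j = _
  rw [ofMatrix_e, ofMatrix_e, iCoef, ← add_assoc]
  rcases eq_or_ne i j with rfl | h
  · simp [e, CharTwo.add_self_eq_zero]
  · simp [e, h.symm, Fin.val_ne_of_ne h]

lemma omega_symCplx_e_last {M : List ℤ} (hM : M.length % 2 = 0) :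
    omega (symCplx M) (e (Fin.last M.length)) = 0 := by
  rw [omega_symCplx]
  refine funext fun j => (ofMatrix_e (wCoef M) (Fin.last M.length) j).trans ?_
  rw [wCoef, Fin.val_last, seqAt_of_length_le le_rfl]
  simp [hM]

section coefficients

variable {M : List ℤ}

lemma dCoef_append_of_le (L : List ℤ) (hM : M.length % 2 = 0) {i : ℕ} (hi : i ≤ M.length)
    (j : ℕ) : dCoef (M ++ L) i j = dCoef M i j := by
  have h1 : i % 2 = 1 → seqAt (M ++ L) i = seqAt M i := fun _ => seqAt_append_of_lt (by omega)
  have h2 : 0 < i → seqAt (M ++ L) (i - 1) = seqAt M (i - 1) :=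
    fun _ => seqAt_append_of_lt (by omega)
  unfold dCoef
  by_cases hp : i % 2 = 1
  · simp [hp, h1 hp]
  · by_cases h0 : 0 < i <;> simp [hp, h0, h2]

lemma wCoef_append_of_lt (L : List ℤ) {i : ℕ} (hi : i < M.length) (j : ℕ) :
    wCoef (M ++ L) i j = wCoef M i j := by
  unfold wCoef
  rw [seqAt_append_of_lt hi, seqAt_append_of_lt (by omega)]

lemma dCoef_eq_zero_of_length_lt (hM : M.length % 2 = 0) {i j : ℕ} (hi : i ≤ M.length)
    (hj : M.length < j) : dCoef M i j = 0 := by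
  unfold dCoef
  split_ifs <;> first | rfl | omega

lemma wCoef_eq_zero_of_length_lt {i j : ℕ} (hi : i < M.length) (hj : M.length < j) :
    wCoef M i j = 0 := by
  unfold wCoef
  split_ifs <;> first | rfl | omega

end coefficients

section appendPair

variable {M : List ℤ} {a b : ℤ}

lemma dCoef_append_pair_length_succ (hM : M.length % 2 = 0) (j : ℕ) :
    dCoef (M ++ [a, b]) (M.length + 1) j =
      if b < 0 ∧ j = M.length + 2 then Uu ^ b.natAbs else 0 := by
  simp only [dCoef, seqAt_append_pair_length_succ]
  split_ifs <;> first | rfl | omega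

lemma dCoef_append_pair_length_add_two (hM : M.length % 2 = 0) (j : ℕ) :
    dCoef (M ++ [a, b]) (M.length + 2) j =
      if 0 < b ∧ j = M.length + 1 then Uu ^ b.natAbs else 0 := by
  simp only [dCoef, show M.length + 2 - 1 = M.length + 1 by omega, seqAt_append_pair_length_succ]
  split_ifs <;> first | rfl | omega

lemma wCoef_append_pair_length (hM : M.length % 2 = 0) (j : ℕ) :
    wCoef (M ++ [a, b]) M.length j = if a = -1 ∧ j = M.length + 1 then 1 else 0 := by
  simp only [wCoef, seqAt_append_pair_length]
  split_ifs <;> first | rfl | omega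

lemma wCoef_append_pair_length_succ (hM : M.length % 2 = 0) (j : ℕ) :
    wCoef (M ++ [a, b]) (M.length + 1) j = if a = 1 ∧ j = M.length then 1 else 0 := by
  simp only [wCoef, Nat.add_sub_cancel, seqAt_append_pair_length]
  split_ifs <;> first | rfl | omega

end appendPair

lemma sum_range_smul_eq_of_le {X : Type*} [AddCommMonoid X] [Module R X] {n N : ℕ}
    (hnN : n ≤ N) {c c' : ℕ → R} {G G' : ℕ → X} (hc : ∀ j, c' j = c j)
    (hG : ∀ j ≤ n, G' j = G j) (hzero : ∀ j, n < j → c j = 0) :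
    ∑ j ∈ Finset.range (N + 1), c' j • G' j =
      ∑ j ∈ Finset.range (n + 1), c j • G j := by
  rw [← Finset.sum_subset (Finset.range_subset_range.2 (Nat.succ_le_succ hnN))]
  · exact Finset.sum_congr rfl fun j hj => by
      rw [hc, hG j (Nat.lt_succ_iff.1 (Finset.mem_range.1 hj))]
  · intro j _ hj
    rw [hc, hzero j (by simpa using hj), zero_smul]

section ofGens

variable {M : List ℤ} {m : ℕ} (G : ℕ → V m) (i : Fin (symCplx M).n)

lemma ofGens_symCplx_d_e :
    ofGens (M.length + 1) G ((symCplx M).d (e i)) =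
      ∑ j ∈ Finset.range (M.length + 1), dCoef M i j • G j :=
  ofGens_ofMatrix_e G (dCoef M) i

lemma ofGens_omega_symCplx_e :
    ofGens (M.length + 1) G (omega (symCplx M) (e i)) =
      ∑ j ∈ Finset.range (M.length + 1), wCoef M i j • G j := by
  rw [omega_symCplx]
  exact ofGens_ofMatrix_e G (wCoef M) i

end ofGens

/-- A short map in terms of the images `G i` of the generators `T_i`. They are indexed by `ℕ`
(values beyond `M.length` play no role) so that one family serves for `M` and its extensions. -/
structure IsShortGens (M : List ℤ) (A : PreAI) (G : ℕ → V A.n) : Prop where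
  isHomog : ∀ i ≤ M.length, IsHomog A.gr (stdGr M i) (G i)
  d_eq : ∀ i ≤ M.length, (i < M.length ∨ M.length % 2 = 0) →
    A.d (G i) = ∑ j ∈ Finset.range (M.length + 1), dCoef M i j • G j
  omega_modU : ∀ i ≤ M.length, (i < M.length ∨ M.length % 2 = 1) →
    modU (omega A (G i) + ∑ j ∈ Finset.range (M.length + 1), wCoef M i j • G j)

lemma isShortMap_ofGens_iff {M : List ℤ} {A : PreAI} {G : ℕ → V A.n} :
    isShortMap M A (ofGens _ G) ↔ IsShortGens M A G := by
  constructor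
  · rintro ⟨hgr, hd, hw⟩
    refine ⟨fun i hi => ?_, fun i hi h => ?_, fun i hi h => ?_⟩
    · have := hgr ⟨i, Nat.lt_succ_of_le hi⟩
      erw [ofGens_e, add_zero] at this
      exact this
    · have := hd ⟨i, Nat.lt_succ_of_le hi⟩ h
      erw [ofGens_e, ofGens_symCplx_d_e] at this
      exact this
    · have := hw ⟨i, Nat.lt_succ_of_le hi⟩ h
      erw [ofGens_e, ofGens_omega_symCplx_e] at this
      exact this
  · rintro ⟨hgr, hd, hw⟩
    refine ⟨fun i => ?_, fun i h => ?_, fun i h => ?_⟩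
    · erw [ofGens_e, add_zero]
      exact hgr i (Nat.le_of_lt_succ i.2)
    · erw [ofGens_e, ofGens_symCplx_d_e]
      exact hd i (Nat.le_of_lt_succ i.2) h
    · erw [ofGens_e, ofGens_omega_symCplx_e]
      exact hw i (Nat.le_of_lt_succ i.2) h

section AIComplex

variable {A : PreAI}

lemma omega_apply (C : PreAI) (x : V C.n) : omega C x = x + C.ι x := rfl

lemma map_iota_add_iota_map {C : PreAI} (f : V C.n →ₗ[R] V A.n) (x : V C.n) :
    f (C.ι x) + A.ι (f x) = f (omega C x) + omega A (f x) := by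
  rw [omega_apply, omega_apply, map_add, add_add_add_comm, add_self_eq_zero_of_module, zero_add]

lemma omega_omega_apply (x : V A.n) : omega A (omega A x) = A.ι (A.ι x) + x := by
  rw [omega_apply, omega_apply, map_add, add_assoc, ← add_assoc (A.ι x),
    add_self_eq_zero_of_module, zero_add, add_comm]

lemma IsAICplx.omega_graded (hA : IsAICplx A) : GradedMap A.gr A.gr 0 (omega A) := fun i =>
  (by simpa using isHomog_e A.gr i : IsHomog A.gr (A.gr i + 0) (e i)).add (hA.2.1 i)

lemma IsAICplx.d_d_apply (hA : IsAICplx A) (x : V A.n) : A.d (A.d x) = 0 := by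
  rw [← LinearMap.comp_apply, hA.1.2, LinearMap.zero_apply]

lemma IsAICplx.omega_omega_modU (hA : IsAICplx A) (hred : Reduced A) (x : V A.n) :
    modU (omega A (omega A x)) := by
  obtain ⟨H, -, hH⟩ := hA.2.2.2.1
  have hHd : modU (H (A.d x)) := modU_map H (hred x)
  have := modU_add (modU_add (hH x) (hred (H x))) hHd
  simp only [LinearMap.add_apply, LinearMap.comp_apply, LinearMap.id_apply,
    add_add_cancel_right_of_module] at this
  rwa [omega_omega_apply]

end AIComplex

lemma homotopicModU_of_forall_e {C₁ C₂ : PreCplx} {f g : V C₁.n →ₗ[R] V C₂.n}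
    (h : ∀ i, modU (f (e i) + g (e i))) : HomotopicModU C₁ C₂ f g :=
  ⟨0, fun i => by simpa using isHomog_zero C₂.gr _, modU_of_forall_e _ (by simpa using h)⟩

lemma isShortMap.isAIMorphism {M : List ℤ} {A : PreAI} {f : V (M.length + 1) →ₗ[R] V A.n}
    (hM : M.length % 2 = 0) (hf : isShortMap M A f)
    (hlast : modU (omega A (f (e (Fin.last M.length))))) : isAIMorphism (symCplx M) A f := by
  refine ⟨hf.1, linearMap_ext_e fun i => (hf.2.1 i (Or.inr hM)).symm,
    homotopicModU_of_forall_e fun i => ?_⟩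
  refine (congrArg modU (map_iota_add_iota_map (C := symCplx M) f (e i))).mpr ?_
  by_cases hi : (i : ℕ) < M.length
  · rw [add_comm]
    exact hf.2.2 i (Or.inl hi)
  · obtain rfl : i = Fin.last _ := Fin.ext (by have : (i : ℕ) < M.length + 1 := i.2; simp; omega)
    erw [omega_symCplx_e_last hM, map_zero, zero_add]
    exact hlast

def appendGens {X : Type*} (n : ℕ) (G : ℕ → X) (y z : X) (j : ℕ) : X :=
  if j ≤ n then G j else if j = n + 1 then y else z

section appendGens

variable {X : Type*} {n : ℕ} {G : ℕ → X} {y z : X}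

lemma appendGens_of_le {j : ℕ} (hj : j ≤ n) : appendGens n G y z j = G j := if_pos hj

@[simp] lemma appendGens_succ : appendGens n G y z (n + 1) = y := by simp [appendGens]

@[simp] lemma appendGens_add_two : appendGens n G y z (n + 2) = z := by simp [appendGens]

end appendGens

section extension

variable {M : List ℤ} {A : PreAI} {G : ℕ → V A.n} {z : V A.n}

lemma IsShortGens.append_isHomog (hM : StdParams M) (hA : IsAICplx A) (hG : IsShortGens M A G)
    (hz : Uu • z = A.d (omega A (G M.length))) (i : ℕ) (hi : i ≤ M.length + 2) :
    IsHomog A.gr (stdGr (M ++ [-1, -1]) i)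
      (appendGens M.length G (omega A (G M.length)) z i) := by
  have hy : IsHomog A.gr (stdGr M M.length) (omega A (G M.length)) := by
    simpa using (hG.isHomog _ le_rfl).map hA.omega_graded
  obtain hi | rfl | rfl : i ≤ M.length ∨ i = M.length + 1 ∨ i = M.length + 2 := by omega
  · rw [stdGr_append_of_le hi, appendGens_of_le hi]
    exact hG.isHomog i hi
  · rw [stdGr_append_pair_length_succ hM.1, appendGens_succ]
    exact hy
  · have hdy := hy.map hA.1.1
    rw [← hz] at hdy
    rw [stdGr_append_pair_length_add_two hM.1, appendGens_add_two]
    convert hdy.of_Uu_smul using 1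
    norm_num [bstep]
    ring

lemma IsShortGens.append_d_eq (hM : StdParams M) (hA : IsAICplx A) (hG : IsShortGens M A G)
    (hz : Uu • z = A.d (omega A (G M.length))) (i : ℕ) (hi : i ≤ M.length + 2) :
    A.d (appendGens M.length G (omega A (G M.length)) z i) =
      ∑ j ∈ Finset.range ((M ++ [-1, -1]).length + 1),
        dCoef (M ++ [-1, -1]) i j • appendGens M.length G (omega A (G M.length)) z j := by
  have hlen : (M ++ [(-1 : ℤ), -1]).length = M.length + 2 := by simp
  obtain hi | rfl | rfl : i ≤ M.length ∨ i = M.length + 1 ∨ i = M.length + 2 := by omega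
  · rw [appendGens_of_le hi, hG.d_eq i hi (Or.inr hM.1)]
    exact (sum_range_smul_eq_of_le (by omega) (dCoef_append_of_le _ hM.1 hi)
      (fun j hj => appendGens_of_le hj) fun j hj => dCoef_eq_zero_of_length_lt hM.1 hi hj).symm
  · simpa [dCoef_append_pair_length_succ hM.1, hlen, ite_smul] using hz.symm
  · have hdz : Uu • A.d z = 0 := by rw [← map_smul, hz, hA.d_d_apply]
    simpa [dCoef_append_pair_length_add_two hM.1, Uu] using hdz

lemma IsShortGens.append_omega_modU (hM : StdParams M) (hA : IsAICplx A) (hred : Reduced A)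
    (hG : IsShortGens M A G) (i : ℕ) (hi : i < M.length + 2) :
    modU (omega A (appendGens M.length G (omega A (G M.length)) z i) +
      ∑ j ∈ Finset.range ((M ++ [-1, -1]).length + 1),
        wCoef (M ++ [-1, -1]) i j • appendGens M.length G (omega A (G M.length)) z j) := by
  have hlen : (M ++ [(-1 : ℤ), -1]).length = M.length + 2 := by simp
  obtain hi | rfl | rfl : i < M.length ∨ i = M.length ∨ i = M.length + 1 := by omega
  · rw [appendGens_of_le hi.le, sum_range_smul_eq_of_le (by omega) (wCoef_append_of_lt _ hi)
      (fun j hj => appendGens_of_le hj) fun j hj => wCoef_eq_zero_of_length_lt hi hj]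
    exact hG.omega_modU i hi.le (Or.inl hi)
  · simpa [wCoef_append_pair_length hM.1, hlen, appendGens_of_le, add_self_eq_zero_of_module]
      using modU_zero
  · simpa [wCoef_append_pair_length_succ hM.1] using hA.omega_omega_modU hred (G M.length)

lemma IsShortGens.append (hM : StdParams M) (hA : IsAICplx A) (hred : Reduced A)
    (hG : IsShortGens M A G) :
    ∃ G' : ℕ → V A.n, IsShortGens (M ++ [-1, -1]) A G' ∧
      ∀ j ≤ M.length, G' j = G j := by
  obtain ⟨z, hz⟩ := modU_iff_exists.1 (hred (omega A (G M.length)))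
  have hlen : (M ++ [(-1 : ℤ), -1]).length = M.length + 2 := by simp
  refine ⟨appendGens M.length G (omega A (G M.length)) z, ⟨fun i hi => ?_, fun i hi _ => ?_,
    fun i hi h => ?_⟩, fun j hj => appendGens_of_le hj⟩
  · exact hG.append_isHomog hM hA hz i (by omega)
  · exact hG.append_d_eq hM hA hz i (by omega)
  · exact hG.append_omega_modU hM hA hred i (by have := hM.1; rw [hlen] at h hi; omega)

lemma IsShortGens.exists_extension (hM : StdParams M) (hA : IsAICplx A) (hred : Reduced A)
    (hG : IsShortGens M A G) (k : ℕ) :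
    ∃ (M' : List ℤ) (G' : ℕ → V A.n), M <+: M' ∧ StdParams M' ∧
      stdGr M' M'.length = stdGr M M.length + k ∧ IsShortGens M' A G' ∧
      ∀ j ≤ M.length, G' j = G j := by
  induction k with
  | zero => exact ⟨M, G, List.prefix_refl M, hM, by simp, hG, fun _ _ => rfl⟩
  | succ k ih =>
    obtain ⟨M', G', hpre, hM', hgr, hG', hagree⟩ := ih
    obtain ⟨G'', hG'', hagree'⟩ := hG'.append hM' hA hred
    refine ⟨M' ++ [-1, -1], G'', hpre.trans (List.prefix_append _ _),
      hM'.append (Or.inr rfl) (by norm_num), ?_, hG'',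
      fun j hj => (hagree' j (hj.trans hpre.length_le)).trans (hagree j hj)⟩
    rw [show (M' ++ [(-1 : ℤ), -1]).length = M'.length + 2 by simp,
      stdGr_append_pair_length_add_two hM'.1, hgr]
    norm_num [bstep]
    ring

end extension

section standardCycles

variable {M : List ℤ}

lemma symCplx_d_e_eq_smul_e {i j : Fin (symCplx M).n} {p : R}
    (h : ∀ l : ℕ, dCoef M i l = if l = j then p else 0) : (symCplx M).d (e i) = p • e j := by
  refine funext fun l => ?_
  rw [show (symCplx M).d (e i) l = dCoef M i l from ofMatrix_e _ _ _, h]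
  simp [e, Fin.val_eq_val]

lemma symCplx_d_apply_eq_zero {j l : Fin (symCplx M).n} {k : ℕ}
    (h : ∀ i : ℕ, dCoef M i l = if i = j then Uu ^ k else 0) {x : V (symCplx M).n}
    (hx : (symCplx M).d x = 0) : x j = 0 := by
  have : ∑ i, x i * dCoef M i l = 0 := congrFun hx l
  simp only [h, Fin.val_eq_val, mul_ite, mul_zero, Finset.sum_ite_eq', Finset.mem_univ,
    if_true] at this
  exact (mul_eq_zero.1 this).resolve_right (pow_ne_zero _ X_ne_zero)

lemma StdParams.coeff_eq_zero_or_exists_d_e (hM : StdParams M) (j : Fin (symCplx M).n)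
    (hj : (j : ℕ) ≠ 0) :
    (∀ x, (symCplx M).d x = 0 → x j = 0) ∨
      ∃ (i : Fin (symCplx M).n) (s : ℕ), s < M.length ∧
        (symCplx M).d (e i) = Uu ^ (seqAt M s).natAbs • e j := by
  have hb (s : ℕ) (hs : s < M.length) (hodd : s % 2 = 1) : seqAt M s ≠ 0 := by
    simpa [hodd] using hM.2 s hs
  have := hM.1
  have hn : (symCplx M).n = M.length + 1 := rfl
  obtain ⟨j, hjlt⟩ := j
  simp only at hj ⊢
  rcases Nat.mod_two_eq_zero_or_one j with hpar | hpar
  · rcases (hb (j - 1) (by omega) (by omega)).lt_or_gt with hneg | hpos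
    · refine Or.inr ⟨⟨j - 1, by omega⟩, j - 1, by omega, symCplx_d_e_eq_smul_e fun l => ?_⟩
      simp only [dCoef]
      split_ifs <;> first | rfl | omega
    · refine Or.inl fun x hx => symCplx_d_apply_eq_zero (l := ⟨j - 1, by omega⟩)
        (k := (seqAt M (j - 1)).natAbs) (fun i => ?_) hx
      simp only [dCoef]
      split_ifs <;> subst_vars <;> first | rfl | omega
  · rcases (hb j (by omega) hpar).lt_or_gt with hneg | hpos
    · refine Or.inl fun x hx => symCplx_d_apply_eq_zero (l := ⟨j + 1, by omega⟩)
        (k := (seqAt M j).natAbs) (fun i => ?_) hx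
      simp only [dCoef]
      split_ifs <;> subst_vars <;> first | rfl | omega
    · refine Or.inr ⟨⟨j + 1, by omega⟩, j, by omega, symCplx_d_e_eq_smul_e fun l => ?_⟩
      simp only [dCoef, Nat.add_sub_cancel]
      split_ifs <;> first | rfl | omega

lemma StdParams.exists_smul_sub_mem_range (hM : StdParams M) {x : V (symCplx M).n}
    (hx : (symCplx M).d x = 0) :
    ∃ K : ℕ,
      Uu ^ K • (x - x ⟨0, Nat.succ_pos _⟩ • e (n := (symCplx M).n) ⟨0, Nat.succ_pos _⟩)
        ∈ LinearMap.range (symCplx M).d := by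
  classical
  set j₀ : Fin (symCplx M).n := ⟨0, Nat.succ_pos _⟩
  set K := (Finset.range M.length).sup fun s => (seqAt M s).natAbs
  have hsum : x - x j₀ • e j₀ = ∑ j ∈ Finset.univ.erase j₀, x j • e j := by
    rw [sub_eq_iff_eq_add', Finset.add_sum_erase _ (fun j => x j • e j) (Finset.mem_univ _),
      ← eq_sum_smul_e]
  refine ⟨K, ?_⟩
  rw [hsum, Finset.smul_sum]
  refine Submodule.sum_mem _ fun j hj => ?_
  have hj0 : (j : ℕ) ≠ 0 := fun h => Finset.ne_of_mem_erase hj (Fin.ext h)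
  rcases hM.coeff_eq_zero_or_exists_d_e j hj0 with h | ⟨i, s, hs, hi⟩
  · rw [h x hx, zero_smul, smul_zero]
    exact zero_mem _
  · have hk : (seqAt M s).natAbs ≤ K :=
      Finset.le_sup (f := fun s => (seqAt M s).natAbs) (Finset.mem_range.2 hs)
    refine ⟨(Uu ^ (K - (seqAt M s).natAbs) * x j) • e i, ?_⟩
    rw [map_smul, hi, smul_smul, smul_smul, mul_right_comm, ← pow_add, Nat.sub_add_cancel hk]

end standardCycles

lemma isLocalMap_of_nontorsionClass {M : List ℤ} {A : PreAI} (hM : StdParams M)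
    (hd : GradedMap A.gr A.gr (-1) A.d) {f : V (symCplx M).n →ₗ[R] V A.n}
    (hf : isAIMorphism (symCplx M) A f)
    (hnt : NontorsionClass A.toPreCplx (f (e ⟨0, Nat.succ_pos _⟩))) :
    isLocalMap (symCplx M) A f := by
  have hchain (v : V (symCplx M).n) : f ((symCplx M).d v) = A.d (f v) :=
    LinearMap.congr_fun hf.2.1 v
  have hT₀ : IsHomog A.gr 0 (f (e ⟨0, Nat.succ_pos _⟩)) := by
    simpa [symCplx, stdGr] using hf.1 ⟨0, Nat.succ_pos _⟩
  refine ⟨hf, fun x ⟨hxc, hxnt⟩ => ⟨?_, fun k hk => ?_⟩⟩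
  · change A.d (f x) = 0
    rw [← hchain, hxc, map_zero]
  obtain ⟨K, hK⟩ := hM.exists_smul_sub_mem_range hxc
  by_cases h0 : x ⟨0, Nat.succ_pos _⟩ = 0
  · exact hxnt K (LinearMap.mem_range.1 (by simpa [h0] using hK))
  refine not_isBdry_smul hd hT₀ hnt.2 (mul_ne_zero (pow_ne_zero (k + K) X_ne_zero) h0)
    (LinearMap.mem_range.1 ?_)
  have h₁ : Uu ^ K • (Uu ^ k • f x) ∈ LinearMap.range A.d :=
    Submodule.smul_mem _ _ (LinearMap.mem_range.2 hk)
  obtain ⟨w, hw⟩ := hK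
  have h₂ : Uu ^ k • A.d (f w) ∈ LinearMap.range A.d :=
    Submodule.smul_mem _ _ (LinearMap.mem_range_self _ _)
  convert sub_mem h₁ h₂ using 1
  rw [← hchain, hw]
  simp only [map_smul, map_sub, Uu]
  module

/-- extension lemma: a short map from a standard complex into a
reduced almost ι-complex extends to a genuine almost ι-morphism from a standard
complex whose parameter sequence extends the original one; it is local if
`f(T_0)` is a `U`-nontorsion homology class. -/
theorem extension_lemma (M : List ℤ) (hM : StdParams M)
    (A : PreAI) (hA : IsAICplx A) (hred : Reduced A)
    (f : V (M.length + 1) →ₗ[R] V A.n) (hf : isShortMap M A f) :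
    ∃ (M' : List ℤ) (hpre : M <+: M'), StdParams M' ∧
      ∃ f' : V (M'.length + 1) →ₗ[R] V A.n,
        isAIMorphism (symCplx M') A f' ∧
        (∀ i : ℕ, ∀ hi : i < M.length + 1,
          f' (e ⟨i, by have := hpre.length_le; omega⟩) = f (e ⟨i, hi⟩)) ∧
        (NontorsionClass A.toPreCplx (f (e ⟨0, Nat.succ_pos _⟩)) →
          isLocalMap (symCplx M') A f') := by
  obtain ⟨N, hN⟩ := (Set.finite_range A.gr).bddAbove
  rw [← ofGens_gens f, isShortMap_ofGens_iff] at hf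
  obtain ⟨M', G', hpre, hM', hgr, hG', hagree⟩ :=
    hf.exists_extension hM hA hred (N + 1 - stdGr M M.length).toNat
  have hlast : G' M'.length = 0 :=
    (hG'.isHomog _ le_rfl).eq_zero_of_lt fun j => by have := hN ⟨j, rfl⟩; omega
  have hf' : isAIMorphism (symCplx M') A (ofGens (M'.length + 1) G') :=
    (isShortMap_ofGens_iff.2 hG').isAIMorphism hM'.1
      (by rw [ofGens_e, Fin.val_last, hlast, map_zero]; exact modU_zero)
  have hext (i : ℕ) (hi : i < M.length + 1) :
      ofGens (M'.length + 1) G' (e ⟨i, by have := hpre.length_le; omega⟩) =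
        f (e ⟨i, hi⟩) := by
    rw [ofGens_e, hagree i (by omega), gens, dif_pos hi]
  refine ⟨M', hpre, hM', ofGens _ G', hf', hext,
    fun hnt => isLocalMap_of_nontorsionClass hM' hA.1.1 hf' ?_⟩
  convert hnt using 2
  exact hext 0 (Nat.succ_pos _)

end AI
end
end

section
/- The ω-homology of a tensor product of standard complexes is one-dimensional: if C and C' are standard complexes of lengths 2m and 2n, then H_ω((C⊗C')/U) := ker(ω̂)/im(ω̂) ≅ F, generated by the class of T_{2m} ⊗ T_{2n}', where ω̂ is the map induced on (C⊗C')/U by ω = 1⊗ω + ω⊗1 + ω⊗ω. -/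
open Polynomial

noncomputable section

/-!
Modulo `U`, `ω` on a standard complex is the matrix `W` of a partial matching: it pairs `T_{2k}`
with `T_{2k+1}` (in the direction given by `a_{2k+1}`) and leaves `T_{2m}` alone. Hence
`W Wᵀ + Wᵀ W = 1 + E`, with `E` the projection onto `T_{2m}`, and `W E = E W = 0`: the transpose
is a homotopy contracting the `ω`-homology onto `T_{2m}`. On the tensor product, where
`ω = ω₁ ⊗ 1 + 1 ⊗ ω₂ + ω₁ ⊗ ω₂`, the map `H = W₁ᵀ ⊗ (1 + W₂) + E₁ ⊗ W₂ᵀ` satisfies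
`ω H + H ω = 1 + E₁ ⊗ E₂` in characteristic 2 (using `W₂² = 0`), so the `ω`-homology is
spanned by `T_{2m} ⊗ T'_{2n}`.
-/

namespace Matrix

open Kronecker

variable {K : Type*} {m n : Type*}

lemma charTwo_add_self [Ring K] [CharP K 2] (A : Matrix m n K) : A + A = 0 := by
  ext; exact CharTwo.add_self_eq_zero _

lemma one_add_one_add_kronecker_one_add [DecidableEq m] [DecidableEq n] [CommRing K] [CharP K 2]
    (W₁ : Matrix m m K) (W₂ : Matrix n n K) :
    1 + (1 + W₁) ⊗ₖ (1 + W₂) = W₁ ⊗ₖ 1 + 1 ⊗ₖ W₂ + W₁ ⊗ₖ W₂ := by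
  rw [← one_kronecker_one, add_kronecker, kronecker_add, kronecker_add, ← add_assoc,
    ← add_assoc (1 ⊗ₖ 1), charTwo_add_self, zero_add]
  abel

variable [Fintype m] [DecidableEq m] [Fintype n] [DecidableEq n]

/-- `H` contracts `Ω` onto the basis vector `t`: for row vectors, `ker Ω / im Ω` is then spanned
by `Pi.single t 1`. -/
def IsSplitHomotopy [Semiring K] (Ω H : Matrix n n K) (t : n) : Prop :=
  Ω * H + H * Ω + single t t 1 = 1 ∧ Ω * single t t 1 = 0 ∧ single t t 1 * Ω = 0

lemma vecMul_single_one [Semiring K] (x : n → K) (t : n) :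
    x ᵥ* single t t 1 = Pi.single t (x t) := by
  ext j
  rw [vecMul, dotProduct, Finset.sum_eq_single t (fun i _ hi => by simp [hi.symm]) (by simp)]
  by_cases hj : j = t
  · subst hj; simp
  · simp [hj, Ne.symm hj]

namespace IsSplitHomotopy

section Semiring

variable [Semiring K] {Ω H : Matrix n n K} {t : n}

lemma single_vecMul_eq_zero (h : IsSplitHomotopy Ω H t) : Pi.single t 1 ᵥ* Ω = 0 := by
  simpa [← vecMul_vecMul, vecMul_single_one] using congrArg (Pi.single t (1 : K) ᵥ* ·) h.2.2

lemma vecMul_apply_eq_zero (h : IsSplitHomotopy Ω H t) (y : n → K) : (y ᵥ* Ω) t = 0 := by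
  simpa [← vecMul_vecMul, vecMul_single_one] using congrFun (congrArg (y ᵥ* ·) h.2.1) t

lemma vecMul_add_single_eq (h : IsSplitHomotopy Ω H t) {x : n → K} (hx : x ᵥ* Ω = 0) :
    (x ᵥ* H) ᵥ* Ω + Pi.single t (x t) = x := by
  simpa [vecMul_add, ← vecMul_vecMul, hx, vecMul_single_one] using congrArg (x ᵥ* ·) h.1

lemma reindex (h : IsSplitHomotopy Ω H t) (e : n ≃ m) :
    IsSplitHomotopy (reindex e e Ω) (reindex e e H) (e t) := by
  have hsingle : Matrix.reindex e e (single t t (1 : K)) = single (e t) (e t) 1 := by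
    simp [reindex_apply]
  obtain ⟨h₁, h₂, h₃⟩ := h
  refine ⟨?_, ?_, ?_⟩ <;> rw [← hsingle, ← coe_reindexRingEquiv K]
  · simpa only [map_add, map_mul, map_one] using congrArg (reindexRingEquiv K e) h₁
  · simpa only [map_mul, map_zero] using congrArg (reindexRingEquiv K e) h₂
  · simpa only [map_mul, map_zero] using congrArg (reindexRingEquiv K e) h₃

end Semiring

lemma homology_zmod_two {Ω H : Matrix n n (ZMod 2)} {t : n} (h : IsSplitHomotopy Ω H t) :
    Pi.single t 1 ᵥ* Ω = 0 ∧ (¬ ∃ y, y ᵥ* Ω = Pi.single t 1) ∧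
      ∀ x, x ᵥ* Ω = 0 → (∃ y, y ᵥ* Ω = x) ∨ ∃ y, y ᵥ* Ω = x + Pi.single t 1 := by
  refine ⟨h.single_vecMul_eq_zero, fun ⟨y, hy⟩ => ?_, fun x hx => ?_⟩
  · simpa [hy] using h.vecMul_apply_eq_zero y
  · have hy := h.vecMul_add_single_eq hx
    rcases (by decide : ∀ a : ZMod 2, a = 0 ∨ a = 1) (x t) with hxt | hxt
    · exact .inl ⟨x ᵥ* H, by simpa [hxt] using hy⟩
    · have hneg : -(Pi.single t 1 : n → ZMod 2) = Pi.single t 1 := by rw [← Pi.single_neg]; rfl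
      exact .inr ⟨x ᵥ* H, by rw [← hneg, ← sub_eq_add_neg, eq_sub_iff_add_eq, ← hxt, hy]⟩

lemma kronecker [CommRing K] [CharP K 2] {W₁ B₁ : Matrix m m K} {W₂ B₂ : Matrix n n K}
    {t₁ : m} {t₂ : n} (h₁ : IsSplitHomotopy W₁ B₁ t₁) (h₂ : IsSplitHomotopy W₂ B₂ t₂)
    (hW₂ : W₂ * W₂ = 0) :
    IsSplitHomotopy (W₁ ⊗ₖ 1 + 1 ⊗ₖ W₂ + W₁ ⊗ₖ W₂)
      (B₁ ⊗ₖ (1 + W₂) + single t₁ t₁ 1 ⊗ₖ B₂) (t₁, t₂) := by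
  obtain ⟨hB₁, hWP₁, hPW₁⟩ := h₁
  obtain ⟨hB₂, hWP₂, hPW₂⟩ := h₂
  have hP : single (t₁, t₂) (t₁, t₂) (1 : K) = single t₁ t₁ 1 ⊗ₖ single t₂ t₂ 1 := by
    rw [single_kronecker_single, mul_one]
  refine ⟨?_, ?_, ?_⟩ <;> rw [hP]
  · rw [← one_kronecker_one]
    simp only [add_mul, mul_add, ← mul_kronecker_mul, mul_one, one_mul, hW₂, hWP₁, hPW₁,
      zero_kronecker, add_zero]
    -- after adding `E₁ ⊗ 1` to both sides, only doubled terms are left to cancel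
    refine add_right_cancel (b := single t₁ t₁ 1 ⊗ₖ 1) ?_
    calc _ = (W₁ * B₁ + B₁ * W₁ + single t₁ t₁ 1) ⊗ₖ 1
          + single t₁ t₁ 1 ⊗ₖ (W₂ * B₂ + B₂ * W₂ + single t₂ t₂ 1)
          + ((W₁ * B₁ + B₁ * W₁) ⊗ₖ W₂ + (W₁ * B₁ + B₁ * W₁) ⊗ₖ W₂)
          + (B₁ ⊗ₖ W₂ + B₁ ⊗ₖ W₂) := by
          simp only [add_kronecker, kronecker_add]; abel
      _ = 1 ⊗ₖ 1 + single t₁ t₁ 1 ⊗ₖ 1 := by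
          rw [hB₁, hB₂, charTwo_add_self, charTwo_add_self, add_zero, add_zero]
  · simp only [add_mul, ← mul_kronecker_mul, hWP₁, hWP₂, zero_kronecker, kronecker_zero, add_zero]
  · simp only [mul_add, ← mul_kronecker_mul, hPW₁, hPW₂, zero_kronecker, kronecker_zero, add_zero]

end IsSplitHomotopy

def matchingMatrix [Zero K] [One K] (p : n → n) (D : n → Prop) [DecidablePred D] :
    Matrix n n K :=
  of fun i j => if D i ∧ j = p i then 1 else 0

section Matching

variable [Semiring K] {p : n → n} {D : n → Prop} [DecidablePred D]

lemma matchingMatrix_mul_self (hD : ∀ i, ¬ (D i ∧ D (p i))) :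
    matchingMatrix p D * matchingMatrix p D = (0 : Matrix n n K) := by
  ext i j
  refine Finset.sum_eq_zero fun k _ => ?_
  by_cases hk : D i ∧ k = p i
  · obtain ⟨hi, rfl⟩ := hk
    have hpi : ¬ D (p i) := fun h => hD i ⟨hi, h⟩
    simp [matchingMatrix, hpi]
  · simp [matchingMatrix, hk]

lemma matchingMatrix_mul_transpose (hp : Function.Injective p) :
    matchingMatrix p D * (matchingMatrix p D)ᵀ =
      (diagonal fun i => if D i then 1 else 0 : Matrix n n K) := by
  ext i j
  by_cases hij : i = j
  · subst hij; by_cases D i <;> simp [mul_apply, matchingMatrix, ite_and, *]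
  · simp [mul_apply, matchingMatrix, ite_and, hp.eq_iff, hij, Ne.symm hij]

lemma transpose_mul_matchingMatrix (hp : Function.Involutive p) :
    (matchingMatrix p D)ᵀ * matchingMatrix p D =
      (diagonal fun i => if D (p i) then 1 else 0 : Matrix n n K) := by
  ext i j
  rw [mul_apply, Finset.sum_eq_single (p i)]
  · by_cases hij : i = j
    · subst hij; by_cases D (p i) <;> simp [matchingMatrix, hp i, *]
    · simp [matchingMatrix, hp i, hij, Ne.symm hij]
  · intro k _ hk
    simp [matchingMatrix, show i ≠ p k from fun h => hk (h ▸ (hp k).symm)]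
  · simp

lemma isSplitHomotopy_matchingMatrix {t : n} (hp : Function.Involutive p)
    (hD : ∀ i, ¬ (D i ∧ D (p i))) (ht : ∀ i, D i ∨ D (p i) ↔ i ≠ t) :
    IsSplitHomotopy (matchingMatrix p D : Matrix n n K) (matchingMatrix p D)ᵀ t := by
  have hDt : ¬ D t := fun h => (ht t).1 (Or.inl h) rfl
  have hDpt : ¬ D (p t) := fun h => (ht t).1 (Or.inr h) rfl
  refine ⟨?_, ?_, ?_⟩
  · rw [matchingMatrix_mul_transpose hp.injective, transpose_mul_matchingMatrix hp]
    ext i j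
    by_cases hij : i = j
    · subst hij
      by_cases hit : i = t
      · subst hit; simp [hDt, hDpt]
      · have := (ht i).2 hit
        have hti : t ≠ i := Ne.symm hit
        by_cases hi : D i <;> simp_all
    · rw [add_apply, add_apply, diagonal_apply_ne _ hij, diagonal_apply_ne _ hij, one_apply_ne hij,
        single_apply, if_neg fun h => hij (h.1.symm.trans h.2), add_zero, add_zero]
  · ext i j
    refine Finset.sum_eq_zero fun k _ => ?_
    have hti : ¬ (D i ∧ t = p i) := fun ⟨hi, h⟩ => hDpt (by rwa [h, hp i])
    by_cases hk : k = t
    · subst hk; simp [matchingMatrix, hti]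
    · simp [Ne.symm hk]
  · ext i j
    refine Finset.sum_eq_zero fun k _ => ?_
    by_cases hk : k = t
    · subst hk; simp [matchingMatrix, hDt]
    · simp [Ne.symm hk]

end Matching

end Matrix

namespace AI

open Matrix Kronecker

def hatMatrix {m n : ℕ} (f : V m →ₗ[R] V n) : Matrix (Fin m) (Fin n) F2 :=
  Matrix.of fun i j => (f (e i) j).coeff 0

lemma hatMatrix_ofMatrix {n : ℕ} (c : ℕ → ℕ → R) :
    hatMatrix (ofMatrix c : V n →ₗ[R] V n) = of fun i j : Fin n => (c i j).coeff 0 := by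
  ext i j
  change (∑ k, e i k * c k j).coeff 0 = _
  simp [e]

lemma hatMatrix_omega (C : PreAI) : hatMatrix (omega C) = 1 + hatMatrix C.ι := by
  ext i j
  by_cases hij : i = j
  · subst hij; simp [hatMatrix, omega, e]
  · simp [hatMatrix, omega, e, hij, Ne.symm hij]

lemma hatMatrix_tmap {m n m' n' : ℕ} (f : V m →ₗ[R] V m') (g : V n →ₗ[R] V n') :
    hatMatrix (tmap f g) =
      reindex finProdFinEquiv finProdFinEquiv (hatMatrix f ⊗ₖ hatMatrix g) := by
  ext q p
  simp [hatMatrix, tmap, e, Polynomial.mul_coeff_zero]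

lemma hatMatrix_omega_tensorAI (C₁ C₂ : PreAI) :
    hatMatrix (omega (tensorAI C₁ C₂)) = reindex finProdFinEquiv finProdFinEquiv
      (hatMatrix (omega C₁) ⊗ₖ 1 + 1 ⊗ₖ hatMatrix (omega C₂) +
        hatMatrix (omega C₁) ⊗ₖ hatMatrix (omega C₂)) := by
  have hι (C : PreAI) : hatMatrix C.ι = 1 + hatMatrix (omega C) := by
    rw [hatMatrix_omega, ← add_assoc, charTwo_add_self, zero_add]
  rw [← one_add_one_add_kronecker_one_add, ← hι, ← hι, hatMatrix_omega, ← coe_reindexRingEquiv,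
    map_add, map_one, coe_reindexRingEquiv, ← hatMatrix_tmap]
  rfl

def partner (L : ℕ) (i : Fin (L + 1)) : Fin (L + 1) :=
  ⟨if (i : ℕ) % 2 = 0 then min (i + 1) L else i - 1, by split_ifs <;> omega⟩

lemma partner_cases (L : ℕ) (i : Fin (L + 1)) :
    ((i : ℕ) % 2 = 0 ∧ (i : ℕ) < L ∧ (partner L i : ℕ) = i + 1) ∨
      ((i : ℕ) % 2 = 0 ∧ (i : ℕ) = L ∧ (partner L i : ℕ) = L) ∨
      ((i : ℕ) % 2 = 1 ∧ (partner L i : ℕ) = i - 1) := by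
  simp only [partner]
  split_ifs <;> omega

lemma partner_involutive {L : ℕ} (hL : L % 2 = 0) : Function.Involutive (partner L) := by
  intro i
  ext
  simp only [partner]
  split_ifs <;> omega

def IsOmegaSource (M : List ℤ) (i : ℕ) : Prop :=
  (i % 2 = 0 ∧ seqAt M i = -1) ∨ (i % 2 = 1 ∧ seqAt M (i - 1) = 1)

instance (M : List ℤ) : DecidablePred (IsOmegaSource M) :=
  fun _ => inferInstanceAs (Decidable (_ ∨ _))

lemma seqAt_eq_zero_of_length_le {M : List ℤ} {i : ℕ} (h : M.length ≤ i) : seqAt M i = 0 :=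
  List.getD_eq_default _ _ h

lemma coeff_wCoef (M : List ℤ) (i j : Fin (M.length + 1)) :
    (wCoef M i j).coeff 0 = if IsOmegaSource M i ∧ j = partner M.length i then 1 else 0 := by
  have hlt : seqAt M i ≠ 0 → (i : ℕ) < M.length := fun h =>
    lt_of_not_ge fun hle => h (seqAt_eq_zero_of_length_le hle)
  have := partner_cases M.length i
  simp only [wCoef, IsOmegaSource, Fin.ext_iff]
  split_ifs <;> first | (exfalso; omega) | simp

lemma hatMatrix_omega_symCplx (M : List ℤ) :
    hatMatrix (omega (symCplx M)) =
      matchingMatrix (partner M.length) fun i => IsOmegaSource M i := by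
  rw [hatMatrix_omega]
  change 1 + hatMatrix (ofMatrix (iCoef M) : V (M.length + 1) →ₗ[R] V (M.length + 1)) = _
  ext i j
  rw [hatMatrix_ofMatrix, Matrix.add_apply, of_apply, iCoef, Polynomial.coeff_add, coeff_wCoef,
    one_apply, ← add_assoc]
  by_cases hij : i = j
  · simp [hij, CharTwo.add_self_eq_zero, matchingMatrix]
  · simp [hij, Fin.val_inj, matchingMatrix]

lemma not_isOmegaSource_and_partner (M : List ℤ) (i : Fin (M.length + 1)) :
    ¬ (IsOmegaSource M i ∧ IsOmegaSource M (partner M.length i)) := by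
  have hlt : seqAt M i ≠ 0 → (i : ℕ) < M.length := fun h =>
    lt_of_not_ge fun hle => h (seqAt_eq_zero_of_length_le hle)
  rcases partner_cases M.length i with ⟨hi, -, hp⟩ | ⟨hi, hL, hp⟩ | ⟨hi, hp⟩
  · simp only [IsOmegaSource, hp, Nat.add_sub_cancel]
    omega
  · have := seqAt_eq_zero_of_length_le (le_refl M.length)
    simp only [IsOmegaSource, hp, hL]
    omega
  · simp only [IsOmegaSource, hp]
    omega

lemma isOmegaSource_or_partner_iff {M : List ℤ} (hM : StdParams M) (i : Fin (M.length + 1)) :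
    IsOmegaSource M i ∨ IsOmegaSource M (partner M.length i) ↔ i ≠ Fin.last M.length := by
  obtain ⟨hlen, hval⟩ := hM
  rw [Ne, Fin.ext_iff, Fin.val_last]
  rcases partner_cases M.length i with ⟨hi, hlt, hp⟩ | ⟨hi, hL, hp⟩ | ⟨hi, hp⟩
  · have := hval i hlt
    rw [if_pos hi] at this
    simp only [IsOmegaSource, hp, Nat.add_sub_cancel]
    omega
  · have := seqAt_eq_zero_of_length_le (le_refl M.length)
    simp only [IsOmegaSource, hp, hL, not_true_eq_false, iff_false]
    omega
  · have := hval (i - 1) (by omega)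
    rw [if_pos (by omega)] at this
    simp only [IsOmegaSource, hp]
    omega

lemma isSplitHomotopy_symCplx {M : List ℤ} (hM : StdParams M) :
    IsSplitHomotopy (hatMatrix (omega (symCplx M))) (hatMatrix (omega (symCplx M)))ᵀ
      (Fin.last M.length) := by
  rw [hatMatrix_omega_symCplx]
  exact isSplitHomotopy_matchingMatrix (partner_involutive hM.1)
    (not_isOmegaSource_and_partner M) (isOmegaSource_or_partner_iff hM)

lemma hatMatrix_omega_symCplx_mul_self (M : List ℤ) :
    hatMatrix (omega (symCplx M)) * hatMatrix (omega (symCplx M)) = 0 := by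
  rw [hatMatrix_omega_symCplx]
  exact matchingMatrix_mul_self (not_isOmegaSource_and_partner M)

lemma e2_eq_single {n : ℕ} (i : Fin n) : e2 i = Pi.single i 1 := by
  ext j
  simp [e2, Pi.single_apply]

/-- the `ω`-homology of a tensor product of standard complexes is
one-dimensional, generated by the class of `T_{2m} ⊗ T_{2n}'`. -/
theorem omega_homology_tensor (M M' : List ℤ) (hM : StdParams M) (hM' : StdParams M')
    (g : Fin (tensorAI (symCplx M) (symCplx M')).n → F2)
    (hg : g = e2 (finProdFinEquiv
      (⟨M.length, Nat.lt_succ_self _⟩, ⟨M'.length, Nat.lt_succ_self _⟩))) :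
    wHat (tensorAI (symCplx M) (symCplx M')) g = 0 ∧
    (¬ ∃ y, wHat (tensorAI (symCplx M) (symCplx M')) y = g) ∧
    (∀ x, wHat (tensorAI (symCplx M) (symCplx M')) x = 0 →
      (∃ y, wHat (tensorAI (symCplx M) (symCplx M')) y = x) ∨
      (∃ y, wHat (tensorAI (symCplx M) (symCplx M')) y = x + g)) := by
  have h := (((isSplitHomotopy_symCplx hM).kronecker (isSplitHomotopy_symCplx hM')
    (hatMatrix_omega_symCplx_mul_self M')).reindex finProdFinEquiv).homology_zmod_two
  rw [← hatMatrix_omega_tensorAI] at h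
  rw [hg, e2_eq_single]
  exact h

end AI
end
end
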